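/- arXiv:0806.1210 — 2 statements merged into one kernel-verified Lean document; each statement's English description precedes it below -/
import Mathlib

section
/- Let (a_h)_{h∈ℤ} be a complete folding sequence with E_n = h_n + 2^n ℤ as above. For every n ∈ ℕ and h ∈ ℤ, if (a_{h-2^{n+1}+1}, ..., a_{h+2^{n+1}-1}) is an (n+2)-folding sequence, then h ∈ E_n. -/
/-- Reversal-with-negation of a finite ±1 word. -/
def negRev (S : List ℤ) : List ℤ := (S.map (fun x => -x)).reverse

/-- `IsFold n S` : `S` is an `n`-folding sequence. -/
inductive IsFold : ℕ → List ℤ → Prop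
  | zero : IsFold 0 []
  | succ (n : ℕ) (S : List ℤ) (ε : ℤ) : IsFold n S → (ε = 1 ∨ ε = -1) →
      IsFold (n + 1) (negRev S ++ ε :: S)

/-- The subword `(a (h+1), …, a (h+t))` of a bi-infinite sequence. -/
def subwordAt (a : ℤ → ℤ) (h : ℤ) (t : ℕ) : List ℤ :=
  (List.range t).map fun i => a (h + 1 + (i : ℤ))

/-- `T` is a finite subword of the bi-infinite sequence `a`. -/
def IsSubword (a : ℤ → ℤ) (T : List ℤ) : Prop := ∃ h : ℤ, T = subwordAt a h T.length

/-- A finite folding sequence: a subword of some `n`-folding sequence. -/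
def IsFiniteFold (T : List ℤ) : Prop := ∃ n S, IsFold n S ∧ T <:+: S

/-- The sequence takes values in `{+1, -1}`. -/
def PM (a : ℤ → ℤ) : Prop := ∀ h : ℤ, a h = 1 ∨ a h = -1

/-- `a (hn + k·2^(n+1)) = (-1)^k · a hn` for all `k`. -/
def AltProp (a : ℤ → ℤ) (n : ℕ) (hn : ℤ) : Prop :=
  ∀ k : ℤ, a (hn + k * 2 ^ (n + 1)) = if Even k then a hn else -a hn

/-- A complete folding sequence (alternation characterization). -/
def CompleteFold (a : ℤ → ℤ) : Prop := PM a ∧ ∀ n : ℕ, ∃ hn : ℤ, AltProp a n hn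

/-- Rotate a direction left (`η = 1`) or right (otherwise). -/
def rot (d : ℤ × ℤ) (η : ℤ) : ℤ × ℤ := if η = 1 then (-d.2, d.1) else (d.2, -d.1)

/-- Unit lattice direction. -/
def IsUnitVec (d : ℤ × ℤ) : Prop := d = (1, 0) ∨ d = (0, 1) ∨ d = (-1, 0) ∨ d = (0, -1)

/-- Direction of the `i`-th step of the curve with turn word `η`. -/
def dirAt (d0 : ℤ × ℤ) (η : List ℤ) (i : ℕ) : ℤ × ℤ := (η.take i).foldl rot d0

/-- `i`-th vertex of the curve started at `X0` with initial direction `d0`. -/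
def vertexAt (X0 d0 : ℤ × ℤ) (η : List ℤ) (i : ℕ) : ℤ × ℤ :=
  X0 + ∑ j ∈ Finset.range i, dirAt d0 η j

/-- `i`-th (unordered) unit edge of the curve. -/
def edgeAt (X0 d0 : ℤ × ℤ) (η : List ℤ) (i : ℕ) : Sym2 (ℤ × ℤ) :=
  s(vertexAt X0 d0 η i, vertexAt X0 d0 η (i + 1))

/-- A complete folding curve, given by its vertex function. -/
def IsCFCurve (V : ℤ → ℤ × ℤ) : Prop :=
  (∀ i : ℤ, IsUnitVec (V (i + 1) - V i)) ∧
  ∃ η : ℤ → ℤ, CompleteFold η ∧ ∀ i : ℤ, V (i + 2) - V (i + 1) = rot (V (i + 1) - V i) (η i)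

/-- Two bi-infinite curves are disjoint: no common unit edge, and at every common
lattice point the four incident traversed edges point in four distinct directions
(the curves do not cross). -/
def CurvesDisjoint (V W : ℤ → ℤ × ℤ) : Prop :=
  (∀ i j : ℤ, s(V i, V (i + 1)) ≠ s(W j, W (j + 1))) ∧
  ∀ i j : ℤ, V i = W j →
    List.Pairwise (· ≠ ·) [V (i - 1) - V i, V (i + 1) - V i, W (j - 1) - W j, W (j + 1) - W j]

lemma fold_length {m : ℕ} {S : List ℤ} (hf : IsFold m S) : S.length = 2 ^ m - 1 := by
  induction hf with
  | zero => simp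
  | succ n S ε hS hε ih =>
    have h1 : 1 ≤ 2 ^ n := Nat.one_le_two_pow
    simp [negRev, ih, pow_succ]
    omega

lemma fold_pair (n : ℕ) (S : List ℤ) (hf : IsFold (n + 2) S)
    (h1 : 2 ^ n - 1 < S.length) (h2 : 3 * 2 ^ n - 1 < S.length) :
    S[2 ^ n - 1] = -S[3 * 2 ^ n - 1] := by
  cases hf with
  | succ _ S' ε hS' hε =>
    have hL : S'.length = 2 ^ (n + 1) - 1 := fold_length hS'
    have hp : 1 ≤ 2 ^ n := Nat.one_le_two_pow
    have hpp : 2 ^ (n+1) = 2 * 2 ^ n := by ring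
    have hlen : (negRev S').length = 2 ^ (n+1) - 1 := by simp [negRev, hL]
    have hia : 2 ^ n - 1 < (negRev S').length := by omega
    have hib : (negRev S').length ≤ 3 * 2 ^ n - 1 := by omega
    rw [List.getElem_append_left hia, List.getElem_append_right hib]
    have e2 : 3 * 2 ^ n - 1 - (negRev S').length = 2 ^ n := by omega
    simp only [e2]
    have e3 : (ε :: S')[2 ^ n]'(by simp; omega) = S'[2 ^ n - 1]'(by omega) := by
      rw [List.getElem_cons]
      split
      · omega
      · rfl
    rw [e3]
    have e4 : (negRev S')[2 ^ n - 1]'hia = -(S'[2 ^ n - 1]'(by omega)) := by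
      simp only [negRev, List.getElem_reverse, List.getElem_map]
      congr 2
      simp [hL]
      omega
    rw [e4]

lemma h_not_dvd (a : ℤ → ℤ) (hpm : PM a) (h : ℕ → ℤ) (halt : ∀ n, AltProp a n (h n))
    {m n : ℕ} (hmn : m < n) : ¬ ((2:ℤ) ^ (m+1) ∣ h n - h m) := by
  rintro ⟨c, hc⟩
  have epow : (2:ℤ) ^ (n - m) * 2 ^ (m+1) = 2 ^ (n+1) := by
    rw [← pow_add]; congr 1; omega
  have e1 := halt m c
  rw [show h m + c * 2^(m+1) = h n by linarith] at e1
  have e2 := halt m (c + 2 ^ (n - m))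
  rw [show h m + (c + 2 ^ (n-m)) * 2^(m+1) = h n + 1 * 2 ^ (n+1) by
    linear_combination epow - hc] at e2
  have e3 := halt n 1
  have h2 : Even ((2:ℤ) ^ (n - m)) := Int.even_pow.mpr ⟨even_two, by omega⟩
  have hev : Even (c + 2 ^ (n - m)) ↔ Even c := by
    rw [Int.even_add]; simp [h2]
  rw [e3, if_neg (by decide : ¬ Even (1:ℤ))] at e2
  simp only [hev] at e2
  rw [← e1] at e2
  rcases hpm (h n) with hv | hv <;> omega

lemma h_struct (a : ℤ → ℤ) (hpm : PM a) (h : ℕ → ℤ) (halt : ∀ n, AltProp a n (h n)) :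
    ∀ m n : ℕ, m < n → (2:ℤ) ^ (m+1) ∣ h n - h m - 2 ^ m := by
  intro m
  induction m with
  | zero =>
    intro n hn
    have hnd := h_not_dvd a hpm h halt hn
    rcases Int.even_or_odd (h n - h 0) with ⟨t, ht⟩ | ⟨t, ht⟩
    · exact absurd ⟨t, by rw [ht]; ring⟩ hnd
    · exact ⟨t, by rw [ht]; ring⟩
  | succ m ih =>
    intro n hn
    have hnd := h_not_dvd a hpm h halt hn
    have d1 : (2:ℤ) ^ (m+1) ∣ h n - h m - 2 ^ m := ih n (by omega)
    have d2 : (2:ℤ) ^ (m+1) ∣ h (m+1) - h m - 2 ^ m := ih (m+1) (by omega)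
    have d3 : (2:ℤ) ^ (m+1) ∣ h n - h (m+1) := by
      have := d1.sub d2
      simpa using this
    obtain ⟨t, ht⟩ := d3
    rcases Int.even_or_odd t with ⟨s, hs⟩ | ⟨s, hs⟩
    · exfalso
      apply hnd
      exact ⟨s, by rw [ht, hs]; ring⟩
    · exact ⟨s, by rw [ht, hs]; ring⟩

lemma exists_max_pow {d : ℤ} {n : ℕ} (hn : ¬ (2:ℤ)^n ∣ d) :
    ∃ m, m < n ∧ (2:ℤ)^m ∣ d ∧ ¬ (2:ℤ)^(m+1) ∣ d := by
  induction n with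
  | zero => simp at hn
  | succ n ih =>
    by_cases hd : (2:ℤ)^n ∣ d
    · exact ⟨n, Nat.lt_succ_self n, hd, hn⟩
    · obtain ⟨m, hm, ha, hb⟩ := ih hd
      exact ⟨m, hm.trans (Nat.lt_succ_self n), ha, hb⟩

theorem statement7 (a : ℤ → ℤ) (hpm : PM a) (h : ℕ → ℤ)
    (halt : ∀ n : ℕ, AltProp a n (h n)) (n : ℕ) (x : ℤ)
    (hfold : IsFold (n + 2) (subwordAt a (x - 2 ^ (n + 1)) (2 ^ (n + 2) - 1))) :
    (2 ^ n : ℤ) ∣ (x - h n) := by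
  by_contra hcon
  -- Step 1: from the folding word, a (x - 2^n) = - a (x + 2^n).
  set S := subwordAt a (x - 2 ^ (n + 1)) (2 ^ (n + 2) - 1) with hS
  have hnp : (1:ℕ) ≤ 2 ^ n := Nat.one_le_two_pow
  have hlen : S.length = 2 ^ (n + 2) - 1 := by
    simp only [hS, subwordAt, bind_pure_comp, List.map_eq_map, List.length_map,
      List.length_range]
  have hb1 : 2 ^ n - 1 < S.length := by
    rw [hlen]; have : 2 ^ (n+2) = 4 * 2 ^ n := by ring
    omega
  have hb2 : 3 * 2 ^ n - 1 < S.length := by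
    rw [hlen]; have : 2 ^ (n+2) = 4 * 2 ^ n := by ring
    omega
  have hpair := fold_pair n S hfold hb1 hb2
  have hget : ∀ (i : ℕ) (hi : i < S.length), S[i] = a (x - 2 ^ (n+1) + 1 + (i:ℤ)) := by
    intro i hi
    simp only [hS, subwordAt, bind_pure_comp, List.map_eq_map, List.getElem_map,
      List.getElem_range]
  rw [hget _ hb1, hget _ hb2] at hpair
  have c1 : ((2 ^ n - 1 : ℕ) : ℤ) = 2 ^ n - 1 := by
    push_cast [Nat.cast_sub hnp]; ring
  have c2 : ((3 * 2 ^ n - 1 : ℕ) : ℤ) = 3 * 2 ^ n - 1 := by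
    push_cast [Nat.cast_sub (by omega : (1:ℕ) ≤ 3 * 2 ^ n)]; ring
  rw [c1, c2] at hpair
  have p1 : (2:ℤ) ^ (n+1) = 2 * 2 ^ n := by ring
  rw [show x - 2^(n+1) + 1 + ((2:ℤ)^n - 1) = x - 2^n by rw [p1]; ring,
      show x - 2^(n+1) + 1 + (3 * (2:ℤ)^n - 1) = x + 2^n by rw [p1]; ring] at hpair
  -- Step 2: from alternation structure, a (x - 2^n) = a (x + 2^n).
  obtain ⟨m, hmn, ⟨u, hu⟩, hnd⟩ := exists_max_pow hcon
  have hodd : Odd u := by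
    rcases Int.even_or_odd u with ⟨s, hs⟩ | hs
    · exact absurd ⟨s, by rw [hu, hs]; ring⟩ hnd
    · exact hs
  obtain ⟨v, hv⟩ := h_struct a hpm h halt m n hmn
  obtain ⟨w, hw⟩ := hodd
  set k : ℤ := w + 1 + v with hkdef
  have hk : x = h m + k * 2 ^ (m+1) := by
    rw [hkdef]; linear_combination hu + (2:ℤ)^m * hw + hv
  have hE : (2:ℤ) ^ (n - m - 1) * 2 ^ (m+1) = 2 ^ n := by
    rw [← pow_add]; congr 1; omega
  have e1 := halt m (k + 2 ^ (n - m - 1))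
  have e2 := halt m (k - 2 ^ (n - m - 1))
  rw [show h m + (k + 2 ^ (n-m-1)) * 2^(m+1) = x + 2^n by
    rw [hk]; linear_combination hE] at e1
  rw [show h m + (k - 2 ^ (n-m-1)) * 2^(m+1) = x - 2^n by
    rw [hk]; linear_combination -hE] at e2
  have hparity : Even (k + 2 ^ (n - m - 1)) ↔ Even (k - 2 ^ (n - m - 1)) := by
    constructor <;> intro ⟨s, hs⟩
    · exact ⟨s - 2 ^ (n - m - 1), by linarith⟩
    · exact ⟨s + 2 ^ (n - m - 1), by linarith⟩
  have heq : a (x + 2 ^ n) = a (x - 2 ^ n) := by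
    rw [e1, e2]
    by_cases hc : Even (k + 2 ^ (n - m - 1))
    · rw [if_pos hc, if_pos (hparity.mp hc)]
    · rw [if_neg hc, if_neg (fun hh => hc (hparity.mpr hh))]
  rcases hpm (x + 2 ^ n) with hz | hz <;> rcases hpm (x - 2 ^ n) with hz' | hz' <;> omega
end

section
/- Every complete folding sequence satisfies the local isomorphism (repetitivity) property with linear bound: if S = (a_h)_{h∈ℤ} is a complete folding sequence, T a subword of S, and r an integer with |T| ≤ 2^r, then T is a subword of (a_{h+1}, ..., a_{h+10·2^r − 2}) for every h ∈ ℤ. -/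
lemma alt_step {a : ℤ → ℤ} {h0 : ℤ} (h : AltProp a 0 h0) {z : ℤ} (hz : 2 ∣ z - h0) :
    a (z + 2) = - a z := by
  obtain ⟨k, hk⟩ := hz
  have h1 := h k
  have h2 := h (k + 1)
  have e : (2:ℤ) ^ (0 + 1) = 2 := by norm_num
  rw [e] at h1 h2
  rw [show z + 2 = h0 + (k+1) * 2 by omega, show z = h0 + k * 2 by omega, h1, h2]
  rcases Int.even_or_odd k with he | ho
  · have hne : ¬ Even (k+1) := by simp [Int.even_add_one, he]
    simp [he, hne]
  · have hne : ¬ Even k := Int.not_even_iff_odd.mpr ho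
    have hev : Even (k+1) := Int.even_add_one.mpr hne
    simp [hne, hev]

lemma alt_shift4 {a : ℤ → ℤ} {h0 : ℤ} (h : AltProp a 0 h0) {z t : ℤ} (hz : 2 ∣ z - h0) :
    a (z + 4 * t) = a z := by
  obtain ⟨k, hk⟩ := hz
  have h1 := h k
  have h2 := h (k + 2 * t)
  have e : (2:ℤ) ^ (0 + 1) = 2 := by norm_num
  rw [e] at h1 h2
  rw [show z + 4 * t = h0 + (k + 2*t) * 2 by ring_nf; omega, show z = h0 + k * 2 by omega,
    h1, h2]
  have hiff : Even (k + 2*t) ↔ Even k := by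
    rw [Int.even_add]
    simp [Int.even_mul]
  rcases Int.even_or_odd k with he | ho
  · simp [he, hiff.mpr he]
  · have hne : ¬ Even k := Int.not_even_iff_odd.mpr ho
    rw [if_neg hne, if_neg (fun hh => hne (hiff.mp hh))]

lemma sub_complete {a : ℤ → ℤ} (ha : CompleteFold a) {h0 : ℤ} (h : AltProp a 0 h0) :
    CompleteFold (fun q => a (h0 + 1 + 2 * q)) := by
  refine ⟨fun q => ha.1 _, fun n => ?_⟩
  obtain ⟨h1, hprop⟩ := ha.2 (n + 1)
  have hodd : ¬ (2 ∣ h1 - h0) := by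
    rintro ⟨m, hm⟩
    have e1 := hprop 1
    have hone : ¬ Even (1:ℤ) := by decide
    rw [if_neg hone] at e1
    have e2 : a (h1 + 1 * 2 ^ (n + 1 + 1)) = a h1 := by
      have hpow : h1 + 1 * 2 ^ (n + 1 + 1) = h1 + 4 * 2 ^ n := by
        rw [pow_succ, pow_succ]; ring
      rw [hpow]
      exact alt_shift4 h ⟨m, by omega⟩
    have := ha.1 h1
    omega
  obtain ⟨m, hm⟩ : ∃ m, h1 = h0 + 1 + 2 * m := by
    rcases Int.even_or_odd (h1 - h0) with ⟨u, hu⟩ | ⟨u, hu⟩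
    · exact absurd ⟨u, by omega⟩ hodd
    · exact ⟨u, by omega⟩
  refine ⟨m, fun k => ?_⟩
  have e : h0 + 1 + 2 * (m + k * 2 ^ (n+1)) = h1 + k * 2 ^ (n + 1 + 1) := by
    rw [hm, pow_succ]; ring
  simp only []
  rw [e, hprop k, hm]

lemma find_same {a : ℤ → ℤ} (ha : CompleteFold a) (z g : ℤ) :
    ∃ z', g + 1 ≤ z' ∧ z' ≤ g + 8 ∧ 2 ∣ (z' - z) ∧ a z' = a z := by
  obtain ⟨h0, alt0⟩ := ha.2 0
  by_cases hz : 2 ∣ (z - h0)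
  · obtain ⟨z0, hz0a, hz0b, hz0c⟩ : ∃ z0, g + 1 ≤ z0 ∧ z0 ≤ g + 2 ∧ 2 ∣ (z0 - h0) := by
      rcases Int.even_or_odd (g + 1 - h0) with ⟨u, hu⟩ | ⟨u, hu⟩
      · exact ⟨g + 1, by omega, by omega, ⟨u, by omega⟩⟩
      · exact ⟨g + 2, by omega, by omega, ⟨u + 1, by omega⟩⟩
    have hstep := alt_step alt0 hz0c
    rcases ha.1 z with h1 | h1 <;> rcases ha.1 z0 with h2 | h2
    · exact ⟨z0, hz0a, by omega, by omega, by omega⟩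
    · exact ⟨z0 + 2, by omega, by omega, by omega, by omega⟩
    · exact ⟨z0 + 2, by omega, by omega, by omega, by omega⟩
    · exact ⟨z0, hz0a, by omega, by omega, by omega⟩
  · have hb : CompleteFold (fun q => a (h0 + 1 + 2 * q)) := sub_complete ha alt0
    obtain ⟨q, hq⟩ : ∃ q, z = h0 + 1 + 2 * q := by
      rcases Int.even_or_odd (z - h0) with ⟨u, hu⟩ | ⟨u, hu⟩
      · exact absurd ⟨u, by omega⟩ hz
      · exact ⟨u, by omega⟩
    obtain ⟨m0, altb⟩ := hb.2 0
    obtain ⟨q1, a1, a2⟩ : ∃ q1, g + 1 ≤ h0 + 1 + 2 * q1 ∧ h0 + 1 + 2 * q1 ≤ g + 2 := by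
      rcases Int.even_or_odd (g - h0) with ⟨u, hu⟩ | ⟨u, hu⟩
      · exact ⟨u, by omega, by omega⟩
      · exact ⟨u + 1, by omega, by omega⟩
    obtain ⟨q2, b1, b2, b3⟩ : ∃ q2, q1 ≤ q2 ∧ q2 ≤ q1 + 1 ∧ 2 ∣ (q2 - m0) := by
      rcases Int.even_or_odd (q1 - m0) with ⟨u, hu⟩ | ⟨u, hu⟩
      · exact ⟨q1, le_refl _, by omega, ⟨u, by omega⟩⟩
      · exact ⟨q1 + 1, by omega, le_refl _, ⟨u + 1, by omega⟩⟩
    have hstep : a (h0 + 1 + 2 * (q2 + 2)) = - a (h0 + 1 + 2 * q2) := alt_step altb b3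
    rcases ha.1 z with h1 | h1 <;> rcases ha.1 (h0 + 1 + 2 * q2) with h2 | h2
    · exact ⟨h0 + 1 + 2 * q2, by omega, by omega, by omega, by omega⟩
    · exact ⟨h0 + 1 + 2 * (q2 + 2), by omega, by omega, by omega, by omega⟩
    · exact ⟨h0 + 1 + 2 * (q2 + 2), by omega, by omega, by omega, by omega⟩
    · exact ⟨h0 + 1 + 2 * q2, by omega, by omega, by omega, by omega⟩

lemma small (a : ℤ → ℤ) (ha : CompleteFold a) (p h : ℤ) (L : ℕ) (hL : L ≤ 1) :
    ∃ p' : ℤ, h ≤ p' ∧ p' + (L : ℤ) ≤ h + 8 ∧ 2 ∣ (p' - p) ∧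
      ∀ i : ℤ, 1 ≤ i → i ≤ (L : ℤ) → a (p' + i) = a (p + i) := by
  interval_cases L
  · rcases Int.even_or_odd (h - p) with ⟨u, hu⟩ | ⟨u, hu⟩
    · exact ⟨h, le_refl _, by omega, ⟨u, by omega⟩, fun i h1 h2 => by omega⟩
    · exact ⟨h + 1, by omega, by omega, ⟨u + 1, by omega⟩, fun i h1 h2 => by omega⟩
  · obtain ⟨z', c1, c2, c3, c4⟩ := find_same ha (p + 1) h
    refine ⟨z' - 1, by omega, by omega, by omega, fun i h1 h2 => ?_⟩
    have : i = 1 := by exact_mod_cast by omega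
    rw [this, show z' - 1 + 1 = z' by ring, c4]

lemma key (r : ℕ) : ∀ (a : ℤ → ℤ), CompleteFold a → ∀ (p h : ℤ) (L : ℕ), (L : ℤ) ≤ 2 ^ r →
    ∃ p' : ℤ, h ≤ p' ∧ p' + (L : ℤ) ≤ h + (10 * 2 ^ r - 2) ∧ 2 ∣ (p' - p) ∧
      ∀ i : ℤ, 1 ≤ i → i ≤ (L : ℤ) → a (p' + i) = a (p + i) := by
  induction r with
  | zero =>
    intro a ha p h L hL
    have hL1 : L ≤ 1 := by
      have : (L:ℤ) ≤ 1 := by simpa using hL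
      exact_mod_cast this
    obtain ⟨p', c1, c2, c3, c4⟩ := small a ha p h L hL1
    exact ⟨p', c1, by norm_num; linarith, c3, c4⟩
  | succ r ih =>
    intro a ha p h L hL
    have hXpos : (0:ℤ) < 2 ^ r := by positivity
    have hX : (2:ℤ) ^ (r + 1) = 2 * 2 ^ r := by rw [pow_succ]; ring
    by_cases hL1 : L ≤ 1
    · obtain ⟨p', c1, c2, c3, c4⟩ := small a ha p h L hL1
      exact ⟨p', c1, by rw [hX]; linarith, c3, c4⟩
    · push_neg at hL1
      obtain ⟨h0, alt0⟩ := ha.2 0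
      have hb : CompleteFold (fun q => a (h0 + 1 + 2 * q)) := sub_complete ha alt0
      -- choose q0 and L'
      obtain ⟨q0, L', F1, F2, F3⟩ :
          ∃ (q0 : ℤ) (L' : ℕ), (L' : ℤ) ≤ 2 ^ r ∧ (L : ℤ) ≤ 2 * L' + 1 ∧
            ∀ i : ℤ, 1 ≤ i → i ≤ (L : ℤ) → ¬ (2 ∣ (p + i - h0)) →
              ∃ j : ℤ, 1 ≤ j ∧ j ≤ (L' : ℤ) ∧ p + i = h0 + 1 + 2 * (q0 + j) := by
        rcases Int.even_or_odd (p - h0) with ⟨s, hs⟩ | ⟨s, hs⟩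
        · refine ⟨s - 1, (L + 1) / 2, ?_, ?_, ?_⟩
          · have : (((L + 1) / 2 : ℕ) : ℤ) = ((L:ℤ) + 1) / 2 := by push_cast; omega
            rw [this]; omega
          · push_cast; omega
          · intro i h1 h2 hnd
            refine ⟨(p + i - h0 + 1) / 2 - s, by omega, ?_, by omega⟩
            push_cast; omega
        · refine ⟨s, L / 2, ?_, ?_, ?_⟩
          · have : ((L / 2 : ℕ) : ℤ) = (L:ℤ) / 2 := by push_cast; omega
            rw [this]; omega
          · push_cast; omega
          · intro i h1 h2 hnd
            refine ⟨(p + i - h0 - 1) / 2 - s, by omega, ?_, by omega⟩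
            push_cast; omega
      -- choose window start g for the sub-sequence
      obtain ⟨g, hg1, hg2⟩ : ∃ g : ℤ, h ≤ p + 2 * (g - q0) ∧ p + 2 * (g - q0) ≤ h + 1 := by
        rcases Int.even_or_odd (h - p) with ⟨u, hu⟩ | ⟨u, hu⟩
        · exact ⟨q0 + u, by omega, by omega⟩
        · exact ⟨q0 + u + 1, by omega, by omega⟩
      obtain ⟨q', g1, g2, g3, g4⟩ := ih _ hb q0 g L' F1
      refine ⟨p + 2 * (q' - q0), by omega, by rw [hX]; linarith, ⟨q' - q0, by ring⟩, ?_⟩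
      intro i h1 h2
      by_cases hcls : 2 ∣ (p + i - h0)
      · obtain ⟨t, ht⟩ := g3
        have := alt_shift4 alt0 (t := t) hcls
        rw [show p + 2 * (q' - q0) + i = p + i + 4 * t by omega, this]
      · obtain ⟨j, hj1, hj2, hj3⟩ := F3 i h1 h2 hcls
        have hbeq : a (h0 + 1 + 2 * (q' + j)) = a (h0 + 1 + 2 * (q0 + j)) := g4 j hj1 hj2
        rw [show p + 2 * (q' - q0) + i = h0 + 1 + 2 * (q' + j) by omega,
          show p + i = h0 + 1 + 2 * (q0 + j) from hj3, hbeq]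

lemma flatMap_single {α β : Type*} (l : List α) (f : α → β) :
    l.flatMap (fun a => [f a]) = l.map f := by
  induction l with
  | nil => rfl
  | cons x xs ih => simp [ih]

lemma subwordAt_eq (a : ℤ → ℤ) (h : ℤ) (t : ℕ) :
    subwordAt a h t = (List.range t).map (fun i : ℕ => a (h + 1 + (i : ℤ))) := by
  unfold subwordAt
  simp only [List.pure_def, List.bind_eq_flatMap, flatMap_single, List.map_map]
  rfl

lemma subwordAt_append (a : ℤ → ℤ) (h : ℤ) (m n : ℕ) :
    subwordAt a h (m + n) = subwordAt a h m ++ subwordAt a (h + m) n := by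
  rw [subwordAt_eq, subwordAt_eq, subwordAt_eq, List.range_add, List.map_append, List.map_map]
  congr 1
  apply List.map_congr_left
  intro i _
  simp only [Function.comp_apply]
  congr 1
  push_cast
  ring

lemma subword_infix (a : ℤ → ℤ) (h p : ℤ) (L W : ℕ) (h1 : h ≤ p) (h2 : p + (L:ℤ) ≤ h + (W:ℤ)) :
    subwordAt a p L <:+: subwordAt a h W := by
  have hmz : ((p - h).toNat : ℤ) = p - h := Int.toNat_of_nonneg (by omega)
  have hW : W = (p - h).toNat + (L + (W - (p - h).toNat - L)) := by omega
  rw [hW, subwordAt_append, subwordAt_append, show h + ((p - h).toNat : ℤ) = p by omega]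
  exact ⟨subwordAt a h (p - h).toNat, subwordAt a (p + L) _, by rw [List.append_assoc]⟩


theorem statement14 (a : ℤ → ℤ) (ha : CompleteFold a) (T : List ℤ)
    (hT : IsSubword a T) (r : ℕ) (hr : T.length ≤ 2 ^ r) (h : ℤ) :
    T <:+: subwordAt a h (10 * 2 ^ r - 2) := by
  obtain ⟨p, hp⟩ := hT
  have hL : (T.length : ℤ) ≤ 2 ^ r := by exact_mod_cast hr
  obtain ⟨p', c1, c2, c3, c4⟩ := key r a ha p h T.length hL
  have hone : (1:ℕ) ≤ 2 ^ r := Nat.one_le_two_pow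
  have hWcast : ((10 * 2 ^ r - 2 : ℕ) : ℤ) = 10 * (2:ℤ) ^ r - 2 := by
    have h2 : (2:ℕ) ≤ 10 * 2 ^ r := le_trans (by norm_num) (Nat.mul_le_mul_left 10 hone)
    push_cast [Nat.cast_sub h2]
    ring
  have hT' : T = subwordAt a p' T.length := by
    conv_lhs => rw [hp]
    rw [subwordAt_eq, subwordAt_eq]
    apply List.map_congr_left
    intro i hi
    have hi' : i < T.length := List.mem_range.mp hi
    have := c4 (1 + (i:ℤ)) (by omega) (by omega)
    rw [show p + 1 + (i:ℤ) = p + (1 + (i:ℤ)) by ring, ← this]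
    ring_nf
  rw [hT']
  exact subword_infix a h p' T.length _ c1 (by rw [hWcast]; linarith)
end
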